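/- In the Pyro game with one firefighter on the path P_n with vertices v₁,…,v_n (n ≥ 3), where the pyro initially burns v_i, the maximum number of vertices that can be saved under optimal play by both players is n − 2 if 2 ≤ i ≤ n − 1 (v_i is a non-leaf), and n − 1 if i ∈ {1, n} (v_i is a leaf). -/

import Mathlib

/-!
The pyro always burns the start vertex `v₀`, and if `v₀` has two neighbours, one firefighter
can protect at most one of them before the pyro spreads from `v₀`; this gives the upper bounds.
Conversely, on a path the firefighter contains the fire: from a leaf she protects its only
neighbour at once; from an inner vertex `v_i` she protects `v_{i+1}` at step 1 and, once `v_{i-1}`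
has burned, `v_{i-2}` at step 2, after which the burned set `{v_{i-1}, v_i}` is walled in.
-/

/-- A game state: the pair (burned vertices, protected vertices). -/
abbrev GState (V : Type*) := Set V × Set V

/-- The history of game states up to time `t`, most recent state first. -/
def histStates {V : Type*} (B P : ℕ → Set V) : ℕ → List (GState V)
  | 0 => [(B 0, P 0)]
  | t + 1 => (B (t + 1), P (t + 1)) :: histStates B P t

/-- A legal firefighter strategy for `k` firefighters on a (possibly finite) graph:
at each history it protects at most `k` vertices, all of them unburned and unprotected
in the current state.  (Protecting fewer than `k` vertices never helps the firefighter,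
so this yields the same optimal value as protecting exactly `k` whenever possible.) -/
def LegalStrategyLe {V : Type*} (k : ℕ) (σ : List (GState V) → Finset V) : Prop :=
  ∀ (h : List (GState V)) (Bs Ps : Set V), h.head? = some (Bs, Ps) →
    (σ h).card ≤ k ∧ (↑(σ h) : Set V) ∩ (Bs ∪ Ps) = ∅

/-- A play of the Pyro game with initial burned vertex `v0`, where the firefighter
follows strategy `σ`: `B t` and `P t` are the burned and protected sets at the end of
step `t`, and `x t` is the burned vertex from which the pyro spreads during step `t+1`.
At each step `t+1` the firefighter first protects the vertices `σ (history)`, and then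
the pyro burns from the burned vertex `x t` to all its unprotected, unburned
neighbours. -/
def IsPyroPlay {V : Type*} (adj : V → V → Prop) (v0 : V)
    (σ : List (GState V) → Finset V)
    (B P : ℕ → Set V) (x : ℕ → V) : Prop :=
  B 0 = {v0} ∧ P 0 = ∅ ∧
  ∀ t : ℕ,
    P (t + 1) = P t ∪ ↑(σ (histStates B P t)) ∧
    x t ∈ B t ∧
    B (t + 1) = B t ∪ {v | adj (x t) v ∧ v ∉ P (t + 1)}

open Set

variable {V : Type*}

lemma histStates_length (B P : ℕ → Set V) (t : ℕ) : (histStates B P t).length = t + 1 := by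
  induction t with
  | zero => rfl
  | succ t ih => simp [histStates, ih]

lemma histStates_headI (B P : ℕ → Set V) (t : ℕ) : (histStates B P t).headI = (B t, P t) := by
  cases t <;> rfl

def FirefighterCanSave (adj : V → V → Prop) (v0 : V) (m : ℕ) : Prop :=
  ∃ σ : List (GState V) → Finset V, LegalStrategyLe 1 σ ∧
    ∀ (B P : ℕ → Set V) (x : ℕ → V), IsPyroPlay adj v0 σ B P x → m ≤ ((⋃ t, B t)ᶜ).ncard

namespace IsPyroPlay

variable {adj : V → V → Prop} {v0 : V} {σ : List (GState V) → Finset V} {B P : ℕ → Set V}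
  {x : ℕ → V}

lemma monotone_protected (hp : IsPyroPlay adj v0 σ B P x) : Monotone P :=
  monotone_nat_of_le_succ fun t => by rw [(hp.2.2 t).1]; exact subset_union_left

lemma monotone_burned (hp : IsPyroPlay adj v0 σ B P x) : Monotone B :=
  monotone_nat_of_le_succ fun t => by rw [(hp.2.2 t).2.2]; exact subset_union_left

lemma mem_burned_succ (hp : IsPyroPlay adj v0 σ B P x) {t : ℕ} {v : V} (hadj : adj (x t) v)
    (hv : v ∉ P (t + 1)) : v ∈ B (t + 1) := by
  rw [(hp.2.2 t).2.2]
  exact Or.inr ⟨hadj, hv⟩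

lemma start_mem_iUnion_burned (hp : IsPyroPlay adj v0 σ B P x) : v0 ∈ ⋃ t, B t :=
  mem_iUnion.2 ⟨0, by rw [hp.1]; rfl⟩

lemma burned_subset_of_firewall (hp : IsPyroPlay adj v0 σ B P x) {S : ℕ → Set V}
    (h0 : v0 ∈ S 0) (hS : Monotone S)
    (hwall : ∀ t, B t ⊆ S t → ∀ u ∈ S t, ∀ v, adj u v → v ∉ S (t + 1) → v ∈ P (t + 1)) :
    ∀ t, B t ⊆ S t
  | 0 => by rw [hp.1]; exact singleton_subset_iff.2 h0
  | t + 1 => by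
    have ih := burned_subset_of_firewall hp h0 hS hwall t
    rw [(hp.2.2 t).2.2]
    rintro v (hv | ⟨hadj, hvP⟩)
    · exact hS t.le_succ (ih hv)
    · by_contra hvS
      exact hvP (hwall t ih (x t) (ih (hp.2.2 t).2.1) v hadj hvS)

end IsPyroPlay

/-- The history of the play in which the pyro spreads from `v0` at every step. -/
def spreadFromStartHist (adj : V → V → Prop) (σ : List (GState V) → Finset V) (v0 : V) :
    ℕ → List (GState V)
  | 0 => [({v0}, ∅)]
  | t + 1 =>
    let h := spreadFromStartHist adj σ v0 t
    let P' : Set V := h.headI.2 ∪ ↑(σ h)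
    (h.headI.1 ∪ {v | adj v0 v ∧ v ∉ P'}, P') :: h

lemma exists_isPyroPlay_spreadFromStart (adj : V → V → Prop) (σ : List (GState V) → Finset V)
    (v0 : V) : ∃ B P, IsPyroPlay adj v0 σ B P (fun _ => v0) := by
  set B := fun t => (spreadFromStartHist adj σ v0 t).headI.1
  set P := fun t => (spreadFromStartHist adj σ v0 t).headI.2
  have hhist : ∀ t, histStates B P t = spreadFromStartHist adj σ v0 t := by
    intro t
    induction t with
    | zero => rfl
    | succ t ih => rw [histStates, ih, spreadFromStartHist]; rfl
  have hstart : ∀ t, v0 ∈ B t := by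
    intro t
    induction t with
    | zero => exact mem_singleton v0
    | succ t ih => exact mem_union_left _ ih
  exact ⟨B, P, rfl, rfl, fun t => ⟨by rw [hhist]; rfl, hstart t, rfl⟩⟩

section Saved

variable [Finite V]

lemma FirefighterCanSave.le_card_sub_one {adj : V → V → Prop} {v0 : V} {m : ℕ}
    (hm : FirefighterCanSave adj v0 m) : m ≤ Nat.card V - 1 := by
  obtain ⟨σ, -, hσ⟩ := hm
  obtain ⟨B, P, hp⟩ := exists_isPyroPlay_spreadFromStart adj σ v0
  calc m ≤ ((⋃ t, B t)ᶜ).ncard := hσ B P _ hp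
    _ ≤ ({v0}ᶜ : Set V).ncard :=
      ncard_le_ncard (compl_subset_compl.2 (singleton_subset_iff.2 hp.start_mem_iUnion_burned))
    _ = Nat.card V - 1 := by rw [ncard_compl, ncard_singleton]

lemma FirefighterCanSave.le_card_sub_two {G : SimpleGraph V} {v0 a b : V} {m : ℕ}
    (hm : FirefighterCanSave G.Adj v0 m) (ha : G.Adj v0 a) (hb : G.Adj v0 b) (hab : a ≠ b) :
    m ≤ Nat.card V - 2 := by
  obtain ⟨σ, hlegal, hσ⟩ := hm
  obtain ⟨B, P, hp⟩ := exists_isPyroPlay_spreadFromStart G.Adj σ v0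
  have hP1 : P 1 = σ (histStates B P 0) := by rw [(hp.2.2 0).1, hp.2.1, empty_union]
  have hcard := (hlegal (histStates B P 0) (B 0) (P 0) rfl).1
  obtain ⟨c, hc, hcP⟩ : ∃ c, G.Adj v0 c ∧ c ∉ P 1 := by
    by_contra! h
    rw [hP1] at h
    exact hab (Finset.card_le_one.1 hcard a (h a ha) b (h b hb))
  have hcB : c ∈ ⋃ t, B t := mem_iUnion.2 ⟨1, hp.mem_burned_succ hc hcP⟩
  calc m ≤ ((⋃ t, B t)ᶜ).ncard := hσ B P _ hp
    _ ≤ ({v0, c}ᶜ : Set V).ncard :=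
      ncard_le_ncard (compl_subset_compl.2 (insert_subset hp.start_mem_iUnion_burned
        (singleton_subset_iff.2 hcB)))
    _ = Nat.card V - 2 := by rw [ncard_compl, ncard_pair hc.ne]

/-- Protects at step `s` what is still unburned and unprotected in `w s`; the history seen at
step `s` has length `s`. -/
noncomputable def scheduledStrategy (w : ℕ → Set V) (h : List (GState V)) : Finset V :=
  (toFinite (w h.length \ (h.headI.1 ∪ h.headI.2))).toFinset

lemma scheduledStrategy_legal {w : ℕ → Set V} (hw : ∀ s, (w s).Subsingleton) :
    LegalStrategyLe 1 (scheduledStrategy w) := by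
  intro h Bs Ps hh
  have hhead : h.headI = (Bs, Ps) := by cases h <;> simp_all
  refine ⟨Finset.card_le_one.2 fun a ha b hb => ?_, ?_⟩
  · simp only [scheduledStrategy, Finite.mem_toFinset] at ha hb
    exact hw _ ha.1 hb.1
  · rw [scheduledStrategy, Finite.coe_toFinset, hhead]
    exact sdiff_inter_self

lemma IsPyroPlay.mem_protected_of_mem_schedule {adj : V → V → Prop} {v0 : V} {w : ℕ → Set V}
    {B P : ℕ → Set V} {x : ℕ → V} (hp : IsPyroPlay adj v0 (scheduledStrategy w) B P x)
    {t : ℕ} {v : V} (hv : v ∈ w (t + 1)) (hvB : v ∉ B t) : v ∈ P (t + 1) := by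
  rw [(hp.2.2 t).1]
  by_cases hvP : v ∈ P t
  · exact Or.inl hvP
  · refine Or.inr ?_
    rw [scheduledStrategy, Finite.coe_toFinset, histStates_length, histStates_headI]
    exact ⟨hv, by rintro (h | h) <;> contradiction⟩

lemma firefighterCanSave_card_sub_one {G : SimpleGraph V} {v0 : V}
    (h : (G.neighborSet v0).Subsingleton) : FirefighterCanSave G.Adj v0 (Nat.card V - 1) := by
  let w : ℕ → Set V := fun s => if s = 1 then G.neighborSet v0 else ∅
  refine ⟨scheduledStrategy w,
    scheduledStrategy_legal fun s => by dsimp only [w]; split_ifs <;> simp [h], ?_⟩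
  intro B P x hp
  have hburned := hp.burned_subset_of_firewall (S := fun _ => {v0}) rfl monotone_const
    fun t _ u hu v huv hv => hp.monotone_protected (Nat.le_add_left 1 t)
      (hp.mem_protected_of_mem_schedule (t := 0) (by simpa [w, ← eq_of_mem_singleton hu] using huv)
        (by rw [hp.1]; exact hv))
  calc Nat.card V - 1 = ({v0}ᶜ : Set V).ncard := by rw [ncard_compl, ncard_singleton]
    _ ≤ ((⋃ t, B t)ᶜ).ncard :=
      ncard_le_ncard (compl_subset_compl.2 (iUnion_subset hburned))

lemma firefighterCanSave_card_sub_two {G : SimpleGraph V} {v0 a : V} (ha : G.Adj v0 a)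
    (h₀ : (G.neighborSet v0 \ {a}).Subsingleton) (hₐ : (G.neighborSet a \ {v0}).Subsingleton) :
    FirefighterCanSave G.Adj v0 (Nat.card V - 2) := by
  let w : ℕ → Set V := fun s =>
    if s = 1 then G.neighborSet v0 \ {a} else if s = 2 then G.neighborSet a \ {v0} else ∅
  refine ⟨scheduledStrategy w,
    scheduledStrategy_legal fun s => by dsimp only [w]; split_ifs <;> simp [h₀, hₐ], ?_⟩
  intro B P x hp
  have hP1 : ∀ v, G.Adj v0 v → v ≠ a → v ∈ P 1 := fun v hv hva =>
    hp.mem_protected_of_mem_schedule (t := 0) (by simp [w, hv, hva])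
      (by rw [hp.1]; exact fun h => hv.ne (eq_of_mem_singleton h).symm)
  have hP2 : ∀ v, G.Adj a v → v ≠ v0 → v ∉ B 1 → v ∈ P 2 := fun v hv hv0 hvB =>
    hp.mem_protected_of_mem_schedule (t := 1) (by simp [w, hv, hv0]) hvB
  let S : ℕ → Set V := fun t => if t = 0 then {v0} else {v0, a}
  have hS : Monotone S := monotone_nat_of_le_succ fun t => by cases t <;> simp [S]
  have hburned := hp.burned_subset_of_firewall (S := S) rfl hS <| by
    rintro (_ | t) hBt u hu v huv hv
    · simp only [S, ↓reduceIte, Nat.add_one_ne_zero, mem_singleton_iff, mem_insert_iff,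
        not_or] at hu hv
      exact hP1 v (hu ▸ huv) hv.2
    · simp only [S, Nat.add_one_ne_zero, ↓reduceIte, mem_insert_iff, mem_singleton_iff,
        not_or] at hu hv hBt
      rcases hu with rfl | rfl
      · exact hp.monotone_protected (by omega) (hP1 v huv hv.2)
      · refine hp.monotone_protected (by omega) (hP2 v huv hv.1 fun hvB => ?_)
        rcases hBt (hp.monotone_burned (by omega) hvB) with h | h
        exacts [hv.1 h, hv.2 h]
  calc Nat.card V - 2 = ({v0, a}ᶜ : Set V).ncard := by rw [ncard_compl, ncard_pair ha.ne]
    _ ≤ ((⋃ t, B t)ᶜ).ncard := ncard_le_ncard (compl_subset_compl.2 (iUnion_subset fun t => ?_))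
  refine (hburned t).trans ?_
  dsimp only [S]
  split_ifs <;> simp

end Saved

lemma pathGraph_neighborSet_subsingleton {n : ℕ} {i : Fin n} (h : i.val = 0 ∨ i.val = n - 1) :
    ((SimpleGraph.pathGraph n).neighborSet i).Subsingleton := by
  intro u hu v hv
  simp only [SimpleGraph.mem_neighborSet, SimpleGraph.pathGraph_adj] at hu hv
  omega

lemma pathGraph_neighborSet_diff_subsingleton {n : ℕ} {u w : Fin n}
    (h : (SimpleGraph.pathGraph n).Adj u w) :
    ((SimpleGraph.pathGraph n).neighborSet u \ {w}).Subsingleton := by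
  intro a ha b hb
  simp only [mem_sdiff, SimpleGraph.mem_neighborSet, SimpleGraph.pathGraph_adj,
    mem_singleton_iff, Fin.ext_iff] at h ha hb
  omega

theorem pyro_path_max_saved_general (n : ℕ) (i : Fin n) :
    IsGreatest
      {m : ℕ | ∃ σ : List (GState (Fin n)) → Finset (Fin n),
        LegalStrategyLe 1 σ ∧
        ∀ (B P : ℕ → Set (Fin n)) (x : ℕ → Fin n),
          IsPyroPlay (SimpleGraph.pathGraph n).Adj i σ B P x →
            m ≤ ((⋃ t, B t)ᶜ).ncard}
      (if i.val = 0 ∨ i.val = n - 1 then n - 1 else n - 2) := by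
  change IsGreatest {m | FirefighterCanSave _ i m} _
  have hcard : Nat.card (Fin n) = n := Nat.card_fin n
  split_ifs with hleaf
  · refine ⟨?_, fun m hm => ?_⟩
    · simpa [hcard] using
        firefighterCanSave_card_sub_one (pathGraph_neighborSet_subsingleton hleaf)
    · simpa [hcard] using hm.le_card_sub_one
  · let a : Fin n := ⟨i.val - 1, by omega⟩
    let b : Fin n := ⟨i.val + 1, by omega⟩
    have ha : (SimpleGraph.pathGraph n).Adj i a := by simp [a, SimpleGraph.pathGraph_adj]; omega
    have hb : (SimpleGraph.pathGraph n).Adj i b := by simp [b, SimpleGraph.pathGraph_adj]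
    refine ⟨?_, fun m hm => ?_⟩
    · simpa [hcard] using firefighterCanSave_card_sub_two ha
        (pathGraph_neighborSet_diff_subsingleton ha)
        (pathGraph_neighborSet_diff_subsingleton ha.symm)
    · simpa [hcard] using hm.le_card_sub_two ha hb (by simp [a, b, Fin.ext_iff])

/-- In the Pyro game with one firefighter on the path `P_n` (`n ≥ 3`) with vertices
`v_0, …, v_{n-1}` and the pyro initially burning `v_i`, the maximum number of saved
vertices under optimal play (the largest number of saved vertices the firefighter can
guarantee against every pyro strategy) is `n - 1` if `v_i` is a leaf (`i = 0` or
`i = n - 1`), and `n - 2` otherwise. -/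
theorem pyro_path_max_saved (n : ℕ) (hn : 3 ≤ n) (i : Fin n) :
    IsGreatest
      {m : ℕ | ∃ σ : List (GState (Fin n)) → Finset (Fin n),
        LegalStrategyLe 1 σ ∧
        ∀ (B P : ℕ → Set (Fin n)) (x : ℕ → Fin n),
          IsPyroPlay (SimpleGraph.pathGraph n).Adj i σ B P x →
            m ≤ ((⋃ t, B t)ᶜ).ncard}
      (if i.val = 0 ∨ i.val = n - 1 then n - 1 else n - 2) :=
  pyro_path_max_saved_general n i
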